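/- Let X, Y be independent finitely supported G-valued random variables with H(X+Y) - H(Y) <= 1/16. Then the set S = {x in supp(X) : D_KL(x+Y || X+Y) <= 1/8} satisfies P(X in S) >= 1/2, and for all x1, x2 in S, ||p_{x1+Y} - p_{x2+Y}||_1 <= 1. -/

import Mathlib

open scoped BigOperators Pointwise
noncomputable section

/-- A finitely supported probability mass function. -/
def IsPMF {α : Type*} (p : α → ℝ) : Prop :=
  (∀ x, 0 ≤ p x) ∧ (Function.support p).Finite ∧ ∑ᶠ x, p x = 1

/-- Shannon entropy of a pmf. -/
def ent {α : Type*} (p : α → ℝ) : ℝ := ∑ᶠ x, -(p x * Real.log (p x))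

/-- Convolution of pmfs: the distribution of the sum of independent random variables. -/
def conv {G : Type*} [AddCommGroup G] (p q : G → ℝ) : G → ℝ :=
  fun z => ∑ᶠ x, p x * q (z - x)

/-- Distribution of the negation. -/
def negp {G : Type*} [AddCommGroup G] (p : G → ℝ) : G → ℝ := fun x => p (-x)

/-- Entropic Ruzsa distance between (the distributions of) two random variables. -/
def rdist {G : Type*} [AddCommGroup G] (p q : G → ℝ) : ℝ :=
  ent (conv p (negp q)) - ent p / 2 - ent q / 2

/-- Distribution of the sum of `n` iid copies. -/
def iterConv {G : Type*} [AddCommGroup G] (p : G → ℝ) : ℕ → G → ℝ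
  | 0 => fun x => Set.indicator ({0} : Set G) (fun _ => (1 : ℝ)) x
  | n + 1 => conv (iterConv p n) p

/-- Kullback–Leibler divergence of pmfs. -/
def KL {α : Type*} (p q : α → ℝ) : ℝ := ∑ᶠ x, p x * Real.log (p x / q x)

/-
Averaged over `x ∼ p`, the divergences `D_KL(x + Y ‖ X + Y)` sum to `H(X + Y) - H(Y) ≤ 1/16`,
so by Markov's inequality the `x` with divergence above `1/8` carry mass at most `1/2`. For `x`
in the remaining set `S`, Pinsker's inequality gives `‖p_{x+Y} - p_{X+Y}‖₁ ≤ √(2 · 1/8) = 1/2`,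
and the triangle inequality through `p_{X+Y}` bounds `‖p_{x₁+Y} - p_{x₂+Y}‖₁` by `1`.
-/
open Function Real

lemma hasDerivAt_log_sub_sub_one_mul_div {t : ℝ} (ht : 0 < t) :
    HasDerivAt (fun t => log t - (t - 1) * (5 * t + 1) / (2 * t * (t + 2)))
      ((t - 1) ^ 3 / (t ^ 2 * (t + 2) ^ 2)) t := by
  have hnum : HasDerivAt (fun t : ℝ => (t - 1) * (5 * t + 1)) (10 * t - 4) t :=
    (((hasDerivAt_id' t).sub_const 1).fun_mul
      (((hasDerivAt_id' t).const_mul 5).add_const 1)).congr_deriv (by ring)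
  have hden : HasDerivAt (fun t : ℝ => 2 * t * (t + 2)) (4 * t + 4) t :=
    (((hasDerivAt_id' t).const_mul 2).fun_mul ((hasDerivAt_id' t).add_const 2)).congr_deriv
      (by ring)
  refine ((hasDerivAt_log ht.ne').fun_sub (hnum.fun_div hden (by positivity))).congr_deriv ?_
  field_simp
  ring

open Set in
lemma sub_one_mul_div_le_log {t : ℝ} (ht : 0 < t) :
    (t - 1) * (5 * t + 1) / (2 * t * (t + 2)) ≤ log t := by
  set k : ℝ → ℝ := fun t => log t - (t - 1) * (5 * t + 1) / (2 * t * (t + 2))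
  have hk : ∀ s ∈ Ioi (0 : ℝ), HasDerivAt k ((s - 1) ^ 3 / (s ^ 2 * (s + 2) ^ 2)) s :=
    fun s hs => hasDerivAt_log_sub_sub_one_mul_div hs
  have hcont : ContinuousOn k (Ioi 0) := fun s hs => (hk s hs).continuousAt.continuousWithinAt
  suffices k 1 ≤ k t by simpa [k] using this
  rcases le_total t 1 with h | h
  · refine antitoneOn_of_hasDerivWithinAt_nonpos (convex_Ioc 0 1) (hcont.mono Ioc_subset_Ioi_self)
      (fun s hs => (hk s (Ioo_subset_Ioi_self (by simpa using hs))).hasDerivWithinAt) ?_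
      ⟨ht, h⟩ ⟨one_pos, le_rfl⟩ h
    intro s hs
    rw [interior_Ioc] at hs
    have : (s - 1) ^ 3 ≤ 0 := by nlinarith [hs.1, hs.2, sq_nonneg (s - 1)]
    exact div_nonpos_of_nonpos_of_nonneg this (by positivity)
  · refine monotoneOn_of_hasDerivWithinAt_nonneg (convex_Ici 1)
      (hcont.mono fun s hs => mem_Ioi.2 (one_pos.trans_le hs))
      (fun s hs => (hk s (lt_trans one_pos (by simpa using hs))).hasDerivWithinAt) ?_
      (mem_Ici.2 le_rfl) h h
    intro s hs
    rw [interior_Ici] at hs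
    have : 0 ≤ (s - 1) ^ 3 := pow_nonneg (by linarith [mem_Ioi.1 hs]) 3
    exact div_nonneg this (by positivity)

lemma three_mul_sq_div_le_mul_log_div {a b : ℝ} (ha : 0 ≤ a) (hb : 0 < b) :
    3 * (a - b) ^ 2 / (2 * (a + 2 * b)) ≤ a * log (a / b) - a + b := by
  rcases ha.eq_or_lt with rfl | ha
  · rw [div_le_iff₀ (by positivity)]
    nlinarith
  · have hlog := mul_le_mul_of_nonneg_left (sub_one_mul_div_le_log (div_pos ha hb)) ha.le
    have hrat : a * ((a / b - 1) * (5 * (a / b) + 1) / (2 * (a / b) * (a / b + 2)))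
        = 3 * (a - b) ^ 2 / (2 * (a + 2 * b)) + a - b := by
      field_simp
      ring
    linarith

-- Pinsker's inequality, by Cauchy–Schwarz with the weights `2 (p + 2 q) / 3`, which sum to `2`,
-- against the pointwise bound `three_mul_sq_div_le_mul_log_div`.
theorem Finset.sq_sum_abs_sub_le_two_mul_sum_mul_log_div {ι : Type*} (s : Finset ι)
    {p q : ι → ℝ} (hp : ∀ i ∈ s, 0 ≤ p i) (hq : ∀ i ∈ s, 0 ≤ q i)
    (hpq : ∀ i ∈ s, p i ≠ 0 → q i ≠ 0) (hp1 : ∑ i ∈ s, p i = 1) (hq1 : ∑ i ∈ s, q i = 1) :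
    (∑ i ∈ s, |p i - q i|) ^ 2 ≤ 2 * ∑ i ∈ s, p i * log (p i / q i) := by
  have hw : ∀ i ∈ s, 0 ≤ p i + 2 * q i := fun i hi => by linarith [hp i hi, hq i hi]
  have hcs := s.sum_sq_le_sum_mul_sum_of_sq_le_mul
    (r := fun i => |p i - q i|) (f := fun i => 3 * (p i - q i) ^ 2 / (2 * (p i + 2 * q i)))
    (g := fun i => 2 * (p i + 2 * q i) / 3)
    (fun i hi => div_nonneg (by positivity) (by linarith [hw i hi]))
    (fun i hi => div_nonneg (by linarith [hw i hi]) (by norm_num)) fun i hi => by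
      rcases (hw i hi).eq_or_lt with h | h
      · obtain ⟨hpi, hqi⟩ : p i = 0 ∧ q i = 0 := by
          constructor <;> linarith [hp i hi, hq i hi]
        simp [hpi, hqi]
      · rw [sq_abs, div_mul_div_cancel₀ (by positivity), mul_div_cancel_left₀ _ (by norm_num)]
  have hw_sum : ∑ i ∈ s, 2 * (p i + 2 * q i) / 3 = 2 := by
    simp only [← Finset.sum_div, ← Finset.mul_sum, Finset.sum_add_distrib, hp1, hq1]
    norm_num
  have hf_le : ∑ i ∈ s, 3 * (p i - q i) ^ 2 / (2 * (p i + 2 * q i))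
      ≤ ∑ i ∈ s, p i * log (p i / q i) := by
    have hpt : ∀ i ∈ s, 3 * (p i - q i) ^ 2 / (2 * (p i + 2 * q i))
        ≤ p i * log (p i / q i) - p i + q i := fun i hi => by
      rcases (hq i hi).eq_or_lt with h | h
      · have hpi : p i = 0 := by by_contra hne; exact hpq i hi hne h.symm
        simp [hpi, ← h]
      · exact three_mul_sq_div_le_mul_log_div (hp i hi) h
    have := Finset.sum_le_sum hpt
    rw [Finset.sum_add_distrib, Finset.sum_sub_distrib, hp1, hq1] at this
    linarith
  rw [hw_sum] at hcs
  linarith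

section Distributions

variable {α : Type*}

lemma IsPMF.sum_eq_one {p : α → ℝ} (hp : IsPMF p) {s : Finset α} (hs : support p ⊆ s) :
    ∑ x ∈ s, p x = 1 :=
  (finsum_eq_sum_of_support_subset p hs).symm.trans hp.2.2

theorem sq_finsum_abs_sub_le_two_mul_KL {p q : α → ℝ} (hp : IsPMF p) (hq : IsPMF q)
    (hpq : ∀ x, p x ≠ 0 → q x ≠ 0) : (∑ᶠ x, |p x - q x|) ^ 2 ≤ 2 * KL p q := by
  classical
  set s := hp.2.1.toFinset ∪ hq.2.1.toFinset
  have hps : support p ⊆ s := by simp [s]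
  have hqs : support q ⊆ s := by simp [s]
  rw [KL, finsum_eq_sum_of_support_subset _ (s := s),
    finsum_eq_sum_of_support_subset _ (s := s)]
  · exact s.sq_sum_abs_sub_le_two_mul_sum_mul_log_div (fun x _ => hp.1 x) (fun x _ => hq.1 x)
      (fun x _ => hpq x) (hp.sum_eq_one hps) (hq.sum_eq_one hqs)
  · exact fun x hx => hps (left_ne_zero_of_mul hx)
  · exact (support_comp_subset abs_zero _).trans
      ((support_sub p q).trans (Set.union_subset hps hqs))

lemma KL_nonneg {p q : α → ℝ} (hp : IsPMF p) (hq : IsPMF q) (hpq : ∀ x, p x ≠ 0 → q x ≠ 0) :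
    0 ≤ KL p q := by
  linarith [sq_finsum_abs_sub_le_two_mul_KL hp hq hpq, sq_nonneg (∑ᶠ x, |p x - q x|)]

lemma finsum_abs_sub_le_sqrt_two_mul_KL {p q : α → ℝ} (hp : IsPMF p) (hq : IsPMF q)
    (hpq : ∀ x, p x ≠ 0 → q x ≠ 0) : ∑ᶠ x, |p x - q x| ≤ √(2 * KL p q) :=
  (le_abs_self _).trans (abs_le_sqrt (sq_finsum_abs_sub_le_two_mul_KL hp hq hpq))

lemma KL_eq_neg_finsum_mul_log_sub_ent {p q : α → ℝ} (hp : HasFiniteSupport p)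
    (hpq : ∀ x, p x ≠ 0 → q x ≠ 0) : KL p q = -(∑ᶠ x, p x * log (q x)) - ent p := by
  rw [KL, ent, ← finsum_neg_distrib, ← finsum_sub_distrib (by fun_prop) (by fun_prop)]
  refine finsum_congr fun x => ?_
  by_cases hx : p x = 0
  · simp [hx]
  · rw [log_div hx (hpq x hx)]
    ring

lemma finsum_abs_sub_le_add {f g h : α → ℝ} (hf : HasFiniteSupport f) (hg : HasFiniteSupport g)
    (hh : HasFiniteSupport h) :
    ∑ᶠ x, |f x - h x| ≤ ∑ᶠ x, |f x - g x| + ∑ᶠ x, |g x - h x| := by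
  rw [← finsum_add_distrib (by fun_prop (disch := simp)) (by fun_prop (disch := simp))]
  exact finsum_le_finsum' (by fun_prop (disch := simp)) (by fun_prop (disch := simp))
    fun x => abs_sub_le _ _ _

lemma IsPMF.one_sub_div_le_finsum_mem {p f : α → ℝ} (hp : IsPMF p)
    (hf : ∀ x, p x ≠ 0 → 0 ≤ f x) {c : ℝ} (hc : 0 < c) :
    1 - (∑ᶠ x, p x * f x) / c ≤ ∑ᶠ x ∈ {x | x ∈ support p ∧ f x ≤ c}, p x := by
  classical
  set s := hp.2.1.toFinset
  have hs : support p ⊆ s := hp.2.1.coe_toFinset.ge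
  have hset : {x | x ∈ support p ∧ f x ≤ c} = ↑(s.filter fun x => f x ≤ c) := by
    ext x
    simp [s]
  rw [hset, finsum_mem_coe_finset,
    finsum_eq_sum_of_support_subset _ fun x hx => hs (left_ne_zero_of_mul hx)]
  have htail : c * ∑ x ∈ s.filter (fun x => ¬f x ≤ c), p x ≤ ∑ x ∈ s, p x * f x :=
    calc c * ∑ x ∈ s.filter (fun x => ¬f x ≤ c), p x
        = ∑ x ∈ s.filter (fun x => ¬f x ≤ c), p x * c := by
          rw [Finset.mul_sum]
          simp_rw [mul_comm c]
      _ ≤ ∑ x ∈ s.filter (fun x => ¬f x ≤ c), p x * f x :=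
          Finset.sum_le_sum fun x hx =>
            mul_le_mul_of_nonneg_left (not_le.1 (Finset.mem_filter.1 hx).2).le (hp.1 x)
      _ ≤ ∑ x ∈ s, p x * f x :=
          Finset.sum_le_sum_of_subset_of_nonneg (Finset.filter_subset _ _) fun x hx _ =>
            mul_nonneg (hp.1 x) (hf x (by simpa [s] using hx))
  have hsplit := Finset.sum_filter_add_sum_filter_not s (fun x => f x ≤ c) p
  rw [hp.sum_eq_one hs] at hsplit
  have := (le_div_iff₀' hc).2 htail
  linarith

end Distributions

section Convolution

variable {G : Type*} [AddCommGroup G] {p q : G → ℝ}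

lemma ent_comp_sub_right (q : G → ℝ) (x : G) : ent (fun z => q (z - x)) = ent q :=
  finsum_comp_equiv (Equiv.subRight x) (f := fun z => -(q z * log (q z)))

lemma IsPMF.comp_sub_right (hq : IsPMF q) (x : G) : IsPMF fun z => q (z - x) :=
  ⟨fun _ => hq.1 _, hq.2.1.preimage sub_left_injective.injOn,
    (finsum_comp_equiv (Equiv.subRight x)).trans hq.2.2⟩

lemma conv_eq_sum {s : Finset G} (hs : support p ⊆ s) (z : G) :
    conv p q z = ∑ x ∈ s, p x * q (z - x) :=
  finsum_eq_sum_of_support_subset _ fun _ hx => hs (left_ne_zero_of_mul hx)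

lemma conv_ne_zero (hp : IsPMF p) (hq : IsPMF q) {x z : G} (hx : p x ≠ 0) (hz : q (z - x) ≠ 0) :
    conv p q z ≠ 0 := by
  have hp' : HasFiniteSupport p := hp.2.1
  refine ((mul_pos ((hp.1 x).lt_of_ne' hx) ((hq.1 _).lt_of_ne' hz)).trans_le ?_).ne'
  exact single_le_finsum x (by fun_prop) fun y => mul_nonneg (hp.1 y) (hq.1 _)

lemma finsum_mul_finsum_comp_sub_mul (hp : HasFiniteSupport p) (hq : HasFiniteSupport q)
    (f : G → ℝ) : ∑ᶠ x, p x * ∑ᶠ z, q (z - x) * f z = ∑ᶠ z, conv p q z * f z := by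
  classical
  have hs : support p ⊆ hp.toFinset := hp.coe_toFinset.ge
  rw [finsum_eq_sum_of_support_subset _ fun x hx => hs (left_ne_zero_of_mul hx)]
  simp_rw [mul_finsum]
  rw [sum_finsum_comm]
  · refine finsum_congr fun z => ?_
    rw [conv_eq_sum hs, Finset.sum_mul]
    simp_rw [mul_assoc]
  · exact fun x _ => by fun_prop (disch := exact sub_left_injective)

lemma IsPMF.conv (hp : IsPMF p) (hq : IsPMF q) : IsPMF (conv p q) := by
  classical
  refine ⟨fun z => finsum_nonneg fun x => mul_nonneg (hp.1 x) (hq.1 _), ?_, ?_⟩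
  · refine (hp.2.1.add hq.2.1).subset fun z hz => ?_
    obtain ⟨x, -, hx⟩ := Finset.exists_ne_zero_of_sum_ne_zero
      ((conv_eq_sum hp.2.1.coe_toFinset.ge z).symm.trans_ne hz)
    exact ⟨x, left_ne_zero_of_mul hx, z - x, right_ne_zero_of_mul hx, add_sub_cancel x z⟩
  · have h := finsum_mul_finsum_comp_sub_mul hp.2.1 hq.2.1 (fun _ => 1)
    simp only [mul_one, fun x => (hq.comp_sub_right x).2.2] at h
    rw [← h, hp.2.2]

lemma finsum_mul_KL_comp_sub_conv (hp : IsPMF p) (hq : IsPMF q) :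
    ∑ᶠ x, p x * KL (fun z => q (z - x)) (conv p q) = ent (conv p q) - ent q := by
  have hp' : HasFiniteSupport p := hp.2.1
  have hKL : ∀ x, p x * KL (fun z => q (z - x)) (conv p q)
      = -(p x * ∑ᶠ z, q (z - x) * log (conv p q z)) - p x * ent q := by
    intro x
    by_cases hx : p x = 0
    · simp [hx]
    · rw [KL_eq_neg_finsum_mul_log_sub_ent (hq.comp_sub_right x).2.1
        fun z hz => conv_ne_zero hp hq hx hz, ent_comp_sub_right]
      ring
  rw [finsum_congr hKL, finsum_sub_distrib (by fun_prop) (by fun_prop), finsum_neg_distrib,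
    finsum_mul_finsum_comp_sub_mul hp.2.1 hq.2.1, ← finsum_mul, hp.2.2, ent, ent,
    finsum_neg_distrib, finsum_neg_distrib]
  ring

end Convolution

/-- if `X, Y` are independent with `H(X+Y) - H(Y) ≤ 1/16`, then the set
`S = {x ∈ supp X : D_KL(x + Y ‖ X + Y) ≤ 1/8}` satisfies `P(X ∈ S) ≥ 1/2` and
`‖p_{x₁+Y} - p_{x₂+Y}‖₁ ≤ 1` for all `x₁, x₂ ∈ S`. -/
theorem almost_period_set {G : Type*} [AddCommGroup G] (p q : G → ℝ)
    (hp : IsPMF p) (hq : IsPMF q)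
    (hsmall : ent (conv p q) - ent q ≤ 1 / 16) :
    (1 : ℝ) / 2 ≤
        (∑ᶠ x ∈ {x : G | x ∈ Function.support p ∧
          KL (fun z => q (z - x)) (conv p q) ≤ 1 / 8}, p x) ∧
      ∀ x₁ ∈ {x : G | x ∈ Function.support p ∧
          KL (fun z => q (z - x)) (conv p q) ≤ 1 / 8},
        ∀ x₂ ∈ {x : G | x ∈ Function.support p ∧
          KL (fun z => q (z - x)) (conv p q) ≤ 1 / 8},
        ∑ᶠ z, |q (z - x₁) - q (z - x₂)| ≤ 1 := by
  set r := conv p q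
  have hr : IsPMF r := hp.conv hq
  have hac : ∀ x, p x ≠ 0 → ∀ z, q (z - x) ≠ 0 → r z ≠ 0 :=
    fun x hx z hz => conv_ne_zero hp hq hx hz
  have hclose : ∀ x ∈ {x | x ∈ support p ∧ KL (fun z => q (z - x)) r ≤ 1 / 8},
      ∑ᶠ z, |q (z - x) - r z| ≤ 1 / 2 := by
    rintro x ⟨hx, hKL⟩
    calc ∑ᶠ z, |q (z - x) - r z| ≤ √(2 * KL (fun z => q (z - x)) r) :=
          finsum_abs_sub_le_sqrt_two_mul_KL (hq.comp_sub_right x) hr (hac x hx)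
      _ ≤ √((1 / 2) ^ 2) := sqrt_le_sqrt (by linarith)
      _ = 1 / 2 := sqrt_sq (by norm_num)
  refine ⟨?_, fun x₁ hx₁ x₂ hx₂ => ?_⟩
  · have hmarkov := hp.one_sub_div_le_finsum_mem
      (fun x hx => KL_nonneg (hq.comp_sub_right x) hr (hac x hx)) (c := 1 / 8) (by norm_num)
    rw [finsum_mul_KL_comp_sub_conv hp hq] at hmarkov
    linarith
  · calc ∑ᶠ z, |q (z - x₁) - q (z - x₂)|
        ≤ ∑ᶠ z, |q (z - x₁) - r z| + ∑ᶠ z, |r z - q (z - x₂)| :=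
          finsum_abs_sub_le_add (hq.comp_sub_right x₁).2.1 hr.2.1 (hq.comp_sub_right x₂).2.1
      _ ≤ 1 / 2 + 1 / 2 :=
          add_le_add (hclose x₁ hx₁) (by simpa only [abs_sub_comm] using hclose x₂ hx₂)
      _ = 1 := by norm_num
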